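/- For every integer k ≥ 2 and all n, m ≥ 0, the Bell numbers of order k satisfy b_k(n)·b_k(m) ≤ b_k(n+m) ≤ 2^{n+m}·b_k(n)·b_k(m). -/

import Mathlib

open scoped Nat

/-- The `k`-times iterated exponential function: `expIter 0 = id`,
`expIter (k+1) x = exp (expIter k x)`. -/
noncomputable def expIter : ℕ → ℝ → ℝ
  | 0 => id
  | k + 1 => fun x => Real.exp (expIter k x)

/-- `BellB k n` is the `n`-th derivative of the `k`-times iterated exponential at `0`,
so that `expIter k x = ∑ n, BellB k n * x ^ n / n !`. -/
noncomputable def BellB (k n : ℕ) : ℝ := iteratedDeriv n (expIter k) 0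

/-- The Bell numbers of order `k`: `bellOrd k n = BellB k n / expIter k 0`. -/
noncomputable def bellOrd (k n : ℕ) : ℝ := BellB k n / expIter k 0

/-!
Differentiating `expIter (k + 1) = exp ∘ expIter k` gives
`(expIter (k + 1))' = (expIter k)' * expIter (k + 1)`, so by Leibniz
`B_{k+1}(n+1) = ∑ᵢ C(n,i) B_k(i+1) B_{k+1}(n-i)`, a recursion with nonnegative coefficients.
Comparing it term by term at `n + m` and at `m` gives `b(n) b(m) ≤ b(n + m)`.

The upper bound comes from the sharper `b(n + m) ≤ C(n+m,n) b(n) b(m)`, i.e. from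
submultiplicativity of the Taylor coefficients `c(n) = b(n) / n!` of `expIter k / expIter k 0`.
If `F = ∑ c(n) xⁿ` solves `F' = H F` with `c(0) = 1` and `H = ∑ h(a) xᵃ` has nonnegative
coefficients, then `c(n + m) ≤ c(n) c(m)` by induction as soon as `h(n + i) ≤ c(n) h(i)`.
At order `k + 1` we have `H = (expIter k)'`, with coefficients `B_k(a+1) / a!`. At order 2 the
condition is `n! i! ≤ (n+i)!` together with `b_2 ≥ 1`; at higher orders it follows from
submultiplicativity one order lower and the growth estimate `(n + 1) b_k(n) ≤ b_{k+1}(n)`,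
which comes from the recursion and `2 expIter k 0 ≤ expIter (k + 1) 0`.
-/

open scoped ContDiff
open Finset

theorem add_le_mul_of_succ_mul_eq_sum {c h : ℕ → ℝ} (hc0 : c 0 = 1) (hc : ∀ n, 0 ≤ c n)
    (hh : ∀ a, 0 ≤ h a)
    (hrec : ∀ s : ℕ, ((s : ℝ) + 1) * c (s + 1) = ∑ a ∈ range (s + 1), h a * c (s - a))
    (hmul : ∀ n i : ℕ, h (n + i) ≤ c n * h i) (n m : ℕ) :
    c (n + m) ≤ c n * c m := by
  induction n using Nat.strong_induction_on with
  | _ n ih =>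
  obtain _ | n := n
  · simp [hc0]
  obtain _ | m := m
  · simp [hc0]
  have hsplit := hrec (n + 1 + m)
  rw [show n + 1 + m + 1 = (n + 1) + (m + 1) by omega, sum_range_add] at hsplit
  have hlow : ∑ a ∈ range (n + 1), h a * c (n + 1 + m - a) ≤
      c (m + 1) * ((n + 1) * c (n + 1)) := by
    rw [hrec n, mul_sum]
    refine sum_le_sum fun a ha => ?_
    have ha : a ≤ n := Nat.lt_succ_iff.mp (mem_range.mp ha)
    rw [show n + 1 + m - a = (n - a) + (m + 1) by omega]
    calc _ ≤ h a * (c (n - a) * c (m + 1)) :=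
          mul_le_mul_of_nonneg_left (ih _ (by omega)) (hh a)
      _ = _ := by ring
  have hhigh : ∑ t ∈ range (m + 1), h (n + 1 + t) * c (n + 1 + m - (n + 1 + t)) ≤
      c (n + 1) * ((m + 1) * c (m + 1)) := by
    rw [hrec m, mul_sum]
    refine sum_le_sum fun t ht => ?_
    rw [show n + 1 + m - (n + 1 + t) = m - t by omega, ← mul_assoc]
    exact mul_le_mul_of_nonneg_right (hmul _ _) (hc _)
  have hpos : (0 : ℝ) < n + 1 + (m + 1) := by positivity
  refine le_of_mul_le_mul_left ?_ hpos
  push_cast at hsplit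
  linear_combination hsplit + hlow + hhigh

lemma contDiff_expIter (k : ℕ) : ContDiff ℝ ∞ (expIter k) := by
  induction k with
  | zero => exact contDiff_id
  | succ k ih => exact Real.contDiff_exp.comp ih

lemma expIter_succ_pos (k : ℕ) (x : ℝ) : 0 < expIter (k + 1) x := Real.exp_pos _

lemma two_mul_expIter_le (k : ℕ) (x : ℝ) : 2 * expIter k x ≤ expIter (k + 1) x :=
  Real.two_mul_le_exp

lemma deriv_expIter_succ (k : ℕ) :
    deriv (expIter (k + 1)) = deriv (expIter k) * expIter (k + 1) := by
  ext x
  have hk : DifferentiableAt ℝ (expIter k) x :=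
    (contDiff_expIter k).differentiable (by simp) x
  exact (deriv_exp hk).trans (mul_comm _ _)

lemma BellB_succ_succ (k n : ℕ) :
    BellB (k + 1) (n + 1) =
      ∑ i ∈ range (n + 1), n.choose i * BellB k (i + 1) * BellB (k + 1) (n - i) := by
  have hd : ContDiff ℝ ∞ (deriv (expIter k)) :=
    (contDiff_infty_iff_deriv.mp (contDiff_expIter k)).2
  rw [BellB, iteratedDeriv_succ', deriv_expIter_succ,
    iteratedDeriv_mul (hd.contDiffAt.of_le (by exact_mod_cast le_top))
      ((contDiff_expIter _).contDiffAt.of_le (by exact_mod_cast le_top))]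
  simp only [BellB, iteratedDeriv_succ']

lemma BellB_zero (k : ℕ) : BellB k 0 = expIter k 0 := by
  simp [BellB]

lemma BellB_one (n : ℕ) : BellB 1 n = 1 := by
  rw [BellB, show expIter 1 = Real.exp from rfl, iteratedDeriv_eq_iterate, Real.iter_deriv_exp,
    Real.exp_zero]

lemma BellB_succ_pos (k n : ℕ) : 0 < BellB (k + 1) n := by
  induction k generalizing n with
  | zero => simp [BellB_one]
  | succ k ih =>
    induction n using Nat.strong_induction_on with
    | _ n ihn =>
      cases n with
      | zero => exact BellB_zero _ ▸ expIter_succ_pos _ _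
      | succ n =>
        rw [BellB_succ_succ]
        refine sum_pos (fun i hi => ?_) nonempty_range_add_one
        have := ihn (n - i) (by omega)
        have := ih (i + 1)
        have : 0 < (n.choose i : ℝ) := by
          exact_mod_cast Nat.choose_pos (Nat.lt_succ_iff.mp (mem_range.mp hi))
        positivity

lemma BellB_succ_eq_mul (k n : ℕ) : BellB (k + 1) n = expIter (k + 1) 0 * bellOrd (k + 1) n := by
  rw [bellOrd, mul_div_cancel₀ _ (expIter_succ_pos k 0).ne']

lemma bellOrd_succ_pos (k n : ℕ) : 0 < bellOrd (k + 1) n :=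
  div_pos (BellB_succ_pos k n) (expIter_succ_pos k 0)

lemma bellOrd_succ_zero (k : ℕ) : bellOrd (k + 1) 0 = 1 := by
  rw [bellOrd, BellB_zero, div_self (expIter_succ_pos k 0).ne']

lemma bellOrd_succ_succ (k n : ℕ) :
    bellOrd (k + 1) (n + 1) =
      ∑ i ∈ range (n + 1), n.choose i * BellB k (i + 1) * bellOrd (k + 1) (n - i) := by
  simp only [bellOrd, BellB_succ_succ, sum_div, mul_div_assoc]

lemma bellOrd_mul_le_bellOrd_add (k n m : ℕ) :
    bellOrd (k + 2) n * bellOrd (k + 2) m ≤ bellOrd (k + 2) (n + m) := by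
  induction m using Nat.strong_induction_on with
  | _ m ih =>
    cases m with
    | zero => rw [bellOrd_succ_zero, mul_one, add_zero]
    | succ m =>
      rw [← add_assoc, bellOrd_succ_succ, bellOrd_succ_succ, mul_sum]
      calc _ ≤ ∑ i ∈ range (m + 1),
              (n + m).choose i * BellB (k + 1) (i + 1) * bellOrd (k + 2) (n + m - i) := by
            refine sum_le_sum fun i hi => ?_
            have hi : i ≤ m := Nat.lt_succ_iff.mp (mem_range.mp hi)
            have hprod := ih (m - i) (by omega)
            rw [show n + (m - i) = n + m - i by omega] at hprod
            have hchoose : (m.choose i : ℝ) ≤ (n + m).choose i := by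
              exact_mod_cast Nat.choose_le_choose i (Nat.le_add_left m n)
            have := BellB_succ_pos k (i + 1)
            have := bellOrd_succ_pos (k + 1) n
            have := bellOrd_succ_pos (k + 1) (m - i)
            calc _ = m.choose i * BellB (k + 1) (i + 1) *
                  (bellOrd (k + 2) n * bellOrd (k + 2) (m - i)) := by ring
              _ ≤ _ := by gcongr
        _ ≤ _ := sum_le_sum_of_subset_of_nonneg (range_subset_range.2 (by omega))
            fun i _ _ => by
              have := BellB_succ_pos k (i + 1)
              have := bellOrd_succ_pos (k + 1) (n + m - i)
              positivity

lemma bellOrd_two_succ (n : ℕ) :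
    bellOrd 2 (n + 1) = ∑ i ∈ range (n + 1), n.choose i * bellOrd 2 (n - i) := by
  simp only [bellOrd_succ_succ, BellB_one, mul_one]

lemma one_le_bellOrd_two (n : ℕ) : 1 ≤ bellOrd 2 n := by
  induction n with
  | zero => rw [bellOrd_succ_zero]
  | succ n ih =>
    have h1 : bellOrd 2 1 = 1 := by simp [bellOrd_two_succ, bellOrd_succ_zero]
    calc 1 ≤ bellOrd 2 n * bellOrd 2 1 := by rwa [h1, mul_one]
      _ ≤ _ := bellOrd_mul_le_bellOrd_add 0 n 1

lemma natCast_le_bellOrd_two (n : ℕ) : (n : ℝ) ≤ bellOrd 2 n := by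
  cases n with
  | zero => simpa using zero_le_one.trans (one_le_bellOrd_two 0)
  | succ n =>
    calc ((n + 1 : ℕ) : ℝ) ≤ 2 ^ n := by exact_mod_cast Nat.lt_two_pow_self
      _ = ∑ i ∈ range (n + 1), (n.choose i : ℝ) * 1 := by
        simp only [mul_one]; exact_mod_cast (Nat.sum_range_choose n).symm
      _ ≤ bellOrd 2 (n + 1) := by
        rw [bellOrd_two_succ]
        gcongr
        exact one_le_bellOrd_two _

lemma succ_mul_bellOrd_le_of_two_mul_BellB_le (k : ℕ)
    (h : ∀ j : ℕ, 2 * j * BellB (k + 1) j ≤ BellB (k + 2) j) (n : ℕ) :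
    (n + 1) * bellOrd (k + 2) n ≤ bellOrd (k + 3) n := by
  induction n using Nat.strong_induction_on with
  | _ n ih =>
    cases n with
    | zero => simp [bellOrd_succ_zero]
    | succ m =>
      rw [bellOrd_succ_succ, bellOrd_succ_succ, mul_sum]
      refine sum_le_sum fun i hi => ?_
      obtain ⟨j, rfl⟩ : ∃ j, m = i + j := ⟨m - i, by have := mem_range.mp hi; omega⟩
      rw [Nat.add_sub_cancel_left]
      have := BellB_succ_pos k (i + 1)
      have := BellB_succ_pos (k + 1) (i + 1)
      have := bellOrd_succ_pos (k + 1) j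
      have hB := h (i + 1)
      have hb := ih j (by omega)
      have hij : ((i + j + 1 : ℕ) : ℝ) + 1 ≤ 2 * ((i + 1 : ℕ) : ℝ) * (j + 1) := by
        push_cast; nlinarith [(i.cast_nonneg : (0 : ℝ) ≤ i), (j.cast_nonneg : (0 : ℝ) ≤ j)]
      calc _ ≤ 2 * ((i + 1 : ℕ) : ℝ) * (j + 1) *
            ((i + j).choose i * BellB (k + 1) (i + 1) * bellOrd (k + 2) j) := by gcongr
        _ = (i + j).choose i * ((2 * ((i + 1 : ℕ) : ℝ) * BellB (k + 1) (i + 1)) *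
              ((j + 1) * bellOrd (k + 2) j)) := by ring
        _ ≤ (i + j).choose i * (BellB (k + 2) (i + 1) * bellOrd (k + 3) j) := by gcongr
        _ = _ := by ring

lemma two_mul_BellB_le (k j : ℕ) : 2 * j * BellB (k + 1) j ≤ BellB (k + 2) j := by
  induction k generalizing j with
  | zero =>
    calc 2 * j * BellB 1 j = 2 * expIter 1 0 * j := by simp [BellB_one, expIter]
      _ ≤ expIter 2 0 * bellOrd 2 j := by
        have := expIter_succ_pos 1 0
        gcongr
        · exact two_mul_expIter_le 1 0
        · exact natCast_le_bellOrd_two j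
      _ = BellB 2 j := (BellB_succ_eq_mul 1 j).symm
  | succ k ih =>
    rw [BellB_succ_eq_mul (k + 1), BellB_succ_eq_mul (k + 2)]
    have := bellOrd_succ_pos (k + 1) j
    calc 2 * j * (expIter (k + 2) 0 * bellOrd (k + 2) j)
        = 2 * expIter (k + 2) 0 * (j * bellOrd (k + 2) j) := by ring
      _ ≤ expIter (k + 3) 0 * ((j + 1) * bellOrd (k + 2) j) := by
        have := expIter_succ_pos (k + 2) 0
        gcongr
        · exact two_mul_expIter_le (k + 2) 0
        · linarith
      _ ≤ expIter (k + 3) 0 * bellOrd (k + 3) j := by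
        have := expIter_succ_pos (k + 2) 0
        gcongr
        exact succ_mul_bellOrd_le_of_two_mul_BellB_le k ih j

lemma succ_mul_bellOrd_le (k n : ℕ) : (n + 1) * bellOrd (k + 2) n ≤ bellOrd (k + 3) n :=
  succ_mul_bellOrd_le_of_two_mul_BellB_le k (two_mul_BellB_le k) n

noncomputable def bellCoeff (k n : ℕ) : ℝ := bellOrd k n / n !

lemma bellCoeff_succ_pos (k n : ℕ) : 0 < bellCoeff (k + 1) n :=
  div_pos (bellOrd_succ_pos k n) (Nat.cast_pos.2 n.factorial_pos)

lemma bellCoeff_succ_zero (k : ℕ) : bellCoeff (k + 1) 0 = 1 := by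
  simp [bellCoeff, bellOrd_succ_zero]

lemma succ_mul_bellCoeff_succ (k s : ℕ) :
    ((s : ℝ) + 1) * bellCoeff (k + 1) (s + 1) =
      ∑ a ∈ range (s + 1), BellB k (a + 1) / a ! * bellCoeff (k + 1) (s - a) := by
  have hlhs : ((s : ℝ) + 1) * bellCoeff (k + 1) (s + 1) = bellOrd (k + 1) (s + 1) / s ! := by
    rw [bellCoeff, Nat.factorial_succ]
    push_cast
    field_simp
  rw [hlhs, bellOrd_succ_succ, sum_div]
  refine sum_congr rfl fun a ha => ?_
  have ha : a ≤ s := Nat.lt_succ_iff.mp (mem_range.mp ha)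
  have hfact : (s.choose a : ℝ) * a ! * (s - a)! = s ! := by
    exact_mod_cast Nat.choose_mul_factorial_mul_factorial ha
  have hchoose : (s.choose a : ℝ) ≠ 0 := by exact_mod_cast (Nat.choose_pos ha).ne'
  rw [bellCoeff, ← hfact]
  field_simp

lemma BellB_succ_succ_div_factorial (k j : ℕ) :
    BellB (k + 1) (j + 1) / j ! = expIter (k + 1) 0 * ((j + 1) * bellCoeff (k + 1) (j + 1)) := by
  rw [BellB_succ_eq_mul, bellCoeff, Nat.factorial_succ]
  push_cast
  field_simp

lemma bellCoeff_add_le_mul (k n m : ℕ) :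
    bellCoeff (k + 2) (n + m) ≤ bellCoeff (k + 2) n * bellCoeff (k + 2) m := by
  induction k generalizing n m with
  | zero =>
    refine add_le_mul_of_succ_mul_eq_sum (bellCoeff_succ_zero 1)
      (fun n => (bellCoeff_succ_pos 1 n).le) (fun a => by simp [BellB_one])
      (succ_mul_bellCoeff_succ 1) (fun n i => ?_) n m
    have hfac : ((n ! * i ! : ℕ) : ℝ) ≤ (n + i) ! := by
      exact_mod_cast Nat.le_of_dvd (Nat.factorial_pos _)
        (Nat.factorial_mul_factorial_dvd_factorial_add n i)
    simp only [BellB_one, bellCoeff]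
    calc 1 / ((n + i) ! : ℝ) ≤ 1 / ((n ! * i ! : ℕ) : ℝ) := by gcongr
      _ = 1 / n ! * (1 / i !) := by push_cast; ring
      _ ≤ bellOrd 2 n / n ! * (1 / i !) := by gcongr; exact one_le_bellOrd_two n
  | succ k ih =>
    refine add_le_mul_of_succ_mul_eq_sum (bellCoeff_succ_zero _)
      (fun n => (bellCoeff_succ_pos _ n).le)
      (fun a => (div_pos (BellB_succ_pos _ _) (by positivity)).le)
      (succ_mul_bellCoeff_succ _) (fun n i => ?_) n m
    rw [BellB_succ_succ_div_factorial, BellB_succ_succ_div_factorial]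
    have hgrow : ((n : ℝ) + 1) * bellCoeff (k + 2) n ≤ bellCoeff (k + 3) n := by
      rw [bellCoeff, bellCoeff, ← mul_div_assoc]
      gcongr
      exact succ_mul_bellOrd_le k n
    have hsub := ih n (i + 1)
    have := bellCoeff_succ_pos (k + 1) n
    have := bellCoeff_succ_pos (k + 1) (i + 1)
    have := expIter_succ_pos (k + 1) 0
    have hni : ((n + i : ℕ) : ℝ) + 1 ≤ (n + 1) * (i + 1) := by
      push_cast; nlinarith [(n.cast_nonneg : (0 : ℝ) ≤ n), (i.cast_nonneg : (0 : ℝ) ≤ i)]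
    calc _ ≤ expIter (k + 2) 0 * (((n : ℝ) + 1) * (i + 1) *
          (bellCoeff (k + 2) n * bellCoeff (k + 2) (i + 1))) := by
            have := bellCoeff_succ_pos (k + 1) (n + i + 1)
            gcongr
            exact hsub
      _ = ((n : ℝ) + 1) * bellCoeff (k + 2) n *
          (expIter (k + 2) 0 * ((i + 1) * bellCoeff (k + 2) (i + 1))) := by ring
      _ ≤ _ := by gcongr

lemma bellOrd_add_le_choose_mul (k n m : ℕ) :
    bellOrd (k + 2) (n + m) ≤ (n + m).choose n * (bellOrd (k + 2) n * bellOrd (k + 2) m) := by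
  have hfact : ((n + m).choose n : ℝ) * (n ! * m !) = (n + m)! := by
    have := Nat.add_choose_mul_factorial_mul_factorial m n
    rw [add_comm m n] at this
    rw [← this]
    push_cast
    ring
  calc bellOrd (k + 2) (n + m) = (n + m)! * bellCoeff (k + 2) (n + m) := by
        rw [bellCoeff]; field_simp
    _ ≤ (n + m)! * (bellCoeff (k + 2) n * bellCoeff (k + 2) m) := by
        gcongr; exact bellCoeff_add_le_mul k n m
    _ = (n + m).choose n * (bellOrd (k + 2) n * bellOrd (k + 2) m) := by
        rw [bellCoeff, bellCoeff, ← hfact]; field_simp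

/-- For every integer `k ≥ 2` and all `n, m ≥ 0`,
`bellOrd k n * bellOrd k m ≤ bellOrd k (n + m) ≤ 2 ^ (n+m) * bellOrd k n * bellOrd k m`. -/
theorem bellOrd_product_bounds_two (k : ℕ) (hk : 2 ≤ k) (n m : ℕ) :
    bellOrd k n * bellOrd k m ≤ bellOrd k (n + m) ∧
      bellOrd k (n + m) ≤ 2 ^ (n + m) * (bellOrd k n * bellOrd k m) := by
  obtain ⟨k, rfl⟩ : ∃ j, k = j + 2 := ⟨k - 2, by omega⟩
  refine ⟨bellOrd_mul_le_bellOrd_add k n m, (bellOrd_add_le_choose_mul k n m).trans ?_⟩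
  have := bellOrd_succ_pos (k + 1) n
  have := bellOrd_succ_pos (k + 1) m
  gcongr
  exact_mod_cast Nat.choose_le_two_pow _ _
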